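/- Let H = [a_0,…,a_{h−1}] ∈ 𝒞_h with h ≥ 1, and suppose that either π(H) = h or h is not divisible by π(H). Then for every n ≥ 2h the periodically repeated cylinder H^{n/h} ∈ 𝒞_n satisfies π(H^{n/h}) = h. -/

import Mathlib

open MeasureTheory Filter Set ProbabilityTheory
open scoped ENNReal

namespace Nonconv

variable {𝒜 : Type*} [MeasurableSpace 𝒜]

/-- The left shift `T` on the sequence space `ℕ → 𝒜`. -/
def shift : (ℕ → 𝒜) → ℕ → 𝒜 := fun ω i => ω (i + 1)

/-- The `n`-cylinder `[a₀,…,a_{n-1}]` determined by the first `n` symbols of `a`. -/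
def cyl (n : ℕ) (a : ℕ → 𝒜) : Set (ℕ → 𝒜) := {ω | ∀ i < n, ω i = a i}

/-- The sub-σ-algebra `ℱ_I` generated by the coordinates in `I`. -/
def coordSigma (I : Set ℕ) : MeasurableSpace (ℕ → 𝒜) :=
  ⨆ i ∈ I, MeasurableSpace.comap (fun ω => ω i) inferInstance

/-- The set of ratios `|μ(B∩C)/(μ(B)μ(C)) − 1|` over `B ∈ G`, `C ∈ H` with
`μ(B)μ(C) ≠ 0`. -/
def psiSet (μ : Measure (ℕ → 𝒜)) (G H : MeasurableSpace (ℕ → 𝒜)) : Set ℝ :=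
  {x | ∃ B C : Set (ℕ → 𝒜), MeasurableSet[G] B ∧ MeasurableSet[H] C ∧
    μ B ≠ 0 ∧ μ C ≠ 0 ∧
    x = |(μ (B ∩ C)).toReal / ((μ B).toReal * (μ C).toReal) - 1|}

/-- The ψ-dependence coefficient `ψ(G,H)`. -/
noncomputable def psi (μ : Measure (ℕ → 𝒜)) (G H : MeasurableSpace (ℕ → 𝒜)) : ℝ :=
  sSup (psiSet μ G H)

/-- The set whose supremum defines `ψ_m`. -/
def psiMixSet (μ : Measure (ℕ → 𝒜)) (m : ℕ) : Set ℝ :=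
  ⋃ n : ℕ, psiSet μ (coordSigma {i | i ≤ n}) (coordSigma {i | n + m + 1 ≤ i})

/-- The ψ-mixing coefficient `ψ_m = sup_n ψ(ℱ_{0,n}, ℱ_{n+m+1,∞})`. -/
noncomputable def psiMix (μ : Measure (ℕ → 𝒜)) (m : ℕ) : ℝ := sSup (psiMixSet μ m)

/-- `μ` is ψ-mixing: `ψ_0 < ∞` and `ψ_m → 0` as `m → ∞`. -/
def IsPsiMixing (μ : Measure (ℕ → 𝒜)) : Prop :=
  BddAbove (psiMixSet μ 0) ∧ Tendsto (psiMix μ) atTop (nhds 0)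

/-- `π(A)` for the cylinder `A = cyl n a`:
the minimal `k ∈ {1,…,n}` with `A ∩ T^{-k}A ≠ ∅`. -/
noncomputable def piCyl (n : ℕ) (a : ℕ → 𝒜) : ℕ :=
  sInf {k : ℕ | 1 ≤ k ∧ k ≤ n ∧ (cyl n a ∩ shift^[k] ⁻¹' cyl n a).Nonempty}

/-- Periodic extension of the string `a` with period `r`, so that
`cyl m (per r a)` is the cylinder `R^{m/r}` if `R = cyl r a`. -/
def per (r : ℕ) (a : ℕ → 𝒜) : ℕ → 𝒜 := fun i => a (i % r)

/-- `κ = lcm { r / gcd(r, dᵢ) : 1 ≤ i ≤ ℓ }`. -/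
def kap (ℓ : ℕ) (d : Fin ℓ → ℕ) (r : ℕ) : ℕ :=
  Finset.univ.lcm fun i => r / Nat.gcd r (d i)

/-- `ρ_A = ∏ᵢ ℙ(R^{(n+dᵢκ)/r} | A)` for `A = cyl n a`, `r = π(A)`, `R = A(π)`. -/
noncomputable def rho (μ : Measure (ℕ → 𝒜)) (ℓ : ℕ) (d : Fin ℓ → ℕ) (n : ℕ)
    (a : ℕ → 𝒜) : ℝ :=
  ∏ i : Fin ℓ,
    (μ (cyl (n + d i * kap ℓ d (piCyl n a)) (per (piCyl n a) a) ∩ cyl n a)).toReal /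
      (μ (cyl n a)).toReal

/-- The multiple recurrence event `{X_k^A = 1} = ∩ᵢ T^{-qᵢ(k)}A`. -/
def hitEvent (ℓ : ℕ) (q : Fin ℓ → ℕ → ℕ) (A : Set (ℕ → 𝒜)) (k : ℕ) : Set (ℕ → 𝒜) :=
  {ω | ∀ i : Fin ℓ, shift^[q i k] ω ∈ A}

/-- The nonconventional sum `S_N^A = ∑_{k=1}^N ∏ᵢ 1_A ∘ T^{qᵢ(k)}`. -/
noncomputable def SN (ℓ : ℕ) (q : Fin ℓ → ℕ → ℕ) (A : Set (ℕ → 𝒜)) (N : ℕ)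
    (ω : ℕ → 𝒜) : ℕ :=
  ∑ k ∈ Finset.Icc 1 N, Set.indicator (hitEvent ℓ q A k) (fun _ => 1) ω

/-- The probability a Poisson random variable with parameter `t` lies in `L`. -/
noncomputable def poissonProb (t : ℝ) (L : Set ℕ) : ℝ :=
  ∑' l : L, Real.exp (-t) * t ^ (l : ℕ) / Nat.factorial (l : ℕ)

/-- `℘(x) = x eˣ`. -/
noncomputable def wp (x : ℝ) : ℝ := x * Real.exp x

/-- `g(n) = inf_{k ≥ n} min_{1 ≤ i ≤ ℓ-1} (q_{i+1}(k) − q_i(k))`, valued in `ℕ∞`. -/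
noncomputable def gfun (ℓ : ℕ) (q : Fin ℓ → ℕ → ℕ) (n : ℕ) : ℕ∞ :=
  ⨅ (k : ℕ) (_ : n ≤ k) (i : Fin ℓ) (j : Fin ℓ) (_ : (i : ℕ) + 1 = (j : ℕ)),
    ((q j k - q i k : ℕ) : ℕ∞)

/-- `γ(n) = min {k ≥ 0 : g(k) ≥ 2n}`. -/
noncomputable def gam (ℓ : ℕ) (q : Fin ℓ → ℕ → ℕ) (n : ℕ) : ℕ :=
  sInf {k : ℕ | ((2 * n : ℕ) : ℕ∞) ≤ gfun ℓ q k}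

/-- The nonconventional hitting time
`τ_A(ω) = min {k ≥ 1 : ∏ᵢ 1_A(T^{dᵢk}ω) = 1}`, valued in `ℝ≥0∞` (equal to `∞` if no
such `k` exists). -/
noncomputable def tauA (ℓ : ℕ) (d : Fin ℓ → ℕ) (A : Set (ℕ → 𝒜)) (ω : ℕ → 𝒜) : ℝ≥0∞ :=
  sInf {x : ℝ≥0∞ | ∃ k : ℕ, 1 ≤ k ∧ (∀ i : Fin ℓ, shift^[d i * k] ω ∈ A) ∧ x = (k : ℝ≥0∞)}

/-!
A sequence `ω` is `k`-periodic exactly when it is a `k`-periodic point of the shift, and then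
`ω` itself witnesses that `cyl n ω` meets `T^{-k} (cyl n ω)`; conversely a self-overlap at lag
`k` makes `ω` `k`-periodic on a window of length `n - k`. If `ω` already has a period `r` with
`2r ≤ n`, the window is long enough to make `q = π(cyl n ω)` a global period, so `gcd r q` is a
period too, and minimality of `q` forces `q ∣ r`.

For `ω = H^{∞}` (period `h`) this gives `q ∣ h`. If `q < h`, then `2q ≤ h`, and the same
argument applied to `cyl h ω = H` gives `π(H) ∣ q`, so `π(H)` is a proper divisor of `h`.
-/

section Periodic

variable {α : Type*}

theorem shift_iterate_apply (ω : ℕ → α) (k i : ℕ) : shift^[k] ω i = ω (i + k) := by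
  induction k generalizing ω with
  | zero => rfl
  | succ k ih => rw [Function.iterate_succ_apply, ih]; rfl

theorem isPeriodicPt_shift_iff {ω : ℕ → α} {k : ℕ} :
    Function.IsPeriodicPt shift k ω ↔ Function.Periodic ω k := by
  rw [Function.IsPeriodicPt, Function.IsFixedPt, funext_iff]
  simp only [shift_iterate_apply, Function.Periodic]

theorem _root_.Function.Periodic.of_forall_lt {ω : ℕ → α} {r k : ℕ} (hω : Function.Periodic ω r)
    (hr : 0 < r) (hk : ∀ j < r, ω (j + k) = ω j) : Function.Periodic ω k := fun j => by
  rw [← hω.map_mod_nat (j + k), ← Nat.mod_add_mod, hω.map_mod_nat,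
    hk _ (Nat.mod_lt j hr), hω.map_mod_nat]

theorem cyl_per (h : ℕ) (a : ℕ → α) : cyl h (per h a) = cyl h a := by
  ext ω
  refine forall₂_congr fun i hi => ?_
  rw [per, Nat.mod_eq_of_lt hi]

theorem piCyl_per (h : ℕ) (a : ℕ → α) : piCyl h (per h a) = piCyl h a := by
  simp only [piCyl, cyl_per]

theorem isPeriodicPt_shift_per (h : ℕ) (a : ℕ → α) :
    Function.IsPeriodicPt shift h (per h a) :=
  isPeriodicPt_shift_iff.2 fun i => by simp only [per, Nat.add_mod_right]

theorem cyl_inter_shift_nonempty {ω : ℕ → α} {k : ℕ} (hω : Function.IsPeriodicPt shift k ω)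
    (n : ℕ) : (cyl n ω ∩ shift^[k] ⁻¹' cyl n ω).Nonempty :=
  ⟨ω, fun _ _ => rfl, by rw [mem_preimage, hω.eq]; exact fun _ _ => rfl⟩

theorem eq_of_cyl_inter_shift_nonempty {ω : ℕ → α} {n k : ℕ}
    (hne : (cyl n ω ∩ shift^[k] ⁻¹' cyl n ω).Nonempty) {i : ℕ} (hi : i + k < n) :
    ω (i + k) = ω i := by
  obtain ⟨η, hη, hηk⟩ := hne
  rw [← hη _ hi, ← hηk i (by omega), shift_iterate_apply]

theorem piCyl_le {ω : ℕ → α} {n k : ℕ} (hω : Function.IsPeriodicPt shift k ω) (hk : 0 < k)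
    (hkn : k ≤ n) : piCyl n ω ≤ k :=
  Nat.sInf_le ⟨hk, hkn, cyl_inter_shift_nonempty hω n⟩

theorem piCyl_mem {ω : ℕ → α} {n k : ℕ} (hω : Function.IsPeriodicPt shift k ω) (hk : 0 < k)
    (hkn : k ≤ n) :
    0 < piCyl n ω ∧ piCyl n ω ≤ n ∧ (cyl n ω ∩ shift^[piCyl n ω] ⁻¹' cyl n ω).Nonempty :=
  Nat.sInf_mem (s := {k | 1 ≤ k ∧ k ≤ n ∧ (cyl n ω ∩ shift^[k] ⁻¹' cyl n ω).Nonempty})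
    ⟨k, hk, hkn, cyl_inter_shift_nonempty hω n⟩

theorem isPeriodicPt_shift_piCyl {ω : ℕ → α} {n r : ℕ} (hω : Function.IsPeriodicPt shift r ω)
    (hr : 0 < r) (hrn : 2 * r ≤ n) : Function.IsPeriodicPt shift (piCyl n ω) ω := by
  have hle : piCyl n ω ≤ r := piCyl_le hω hr (by omega)
  obtain ⟨-, -, hne⟩ := piCyl_mem (n := n) hω hr (by omega)
  exact isPeriodicPt_shift_iff.2 <| (isPeriodicPt_shift_iff.1 hω).of_forall_lt hr
    fun j hj => eq_of_cyl_inter_shift_nonempty hne (i := j) (by omega)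

theorem piCyl_dvd {ω : ℕ → α} {n r : ℕ} (hω : Function.IsPeriodicPt shift r ω)
    (hr : 0 < r) (hrn : 2 * r ≤ n) : piCyl n ω ∣ r := by
  have hgcd : Function.IsPeriodicPt shift (r.gcd (piCyl n ω)) ω :=
    hω.gcd (isPeriodicPt_shift_piCyl hω hr hrn)
  have hmin : piCyl n ω ≤ r.gcd (piCyl n ω) :=
    piCyl_le hgcd (Nat.gcd_pos_of_pos_left _ hr) ((Nat.gcd_le_left _ hr).trans (by omega))
  rw [← Nat.gcd_eq_right_iff_dvd]
  exact le_antisymm (Nat.gcd_le_right _ (piCyl_mem hω hr (by omega)).1) hmin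

end Periodic

theorem piCyl_per_eq_general (h : ℕ) (hh : 1 ≤ h) (a : ℕ → 𝒜)
    (hH : piCyl h a = h ∨ ¬ piCyl h a ∣ h) :
    ∀ n : ℕ, 2 * h ≤ n → piCyl n (per h a) = h := by
  intro n hn
  have hper := isPeriodicPt_shift_per h a
  have hq : piCyl n (per h a) ∣ h := piCyl_dvd hper hh hn
  have hq_pos : 0 < piCyl n (per h a) := Nat.pos_of_dvd_of_pos hq hh
  by_contra hne
  have h2q : 2 * piCyl n (per h a) ≤ h := by
    obtain ⟨m, hm⟩ := hq
    have hm2 : 2 ≤ m := by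
      by_contra! hm2
      interval_cases m <;> omega
    nlinarith
  have hp : piCyl h a ∣ piCyl n (per h a) := by
    rw [← piCyl_per]
    exact piCyl_dvd (isPeriodicPt_shift_piCyl hper hh hn) hq_pos h2q
  rcases hH with hH | hH
  · exact absurd (Nat.le_of_dvd hq_pos hp) (by omega)
  · exact hH (hp.trans hq)

/-- Lemma 3.5. If `H = cyl h a` with `h ≥ 1` and either `π(H) = h`
or `π(H)` does not divide `h`, then `π(H^{n/h}) = h` for every `n ≥ 2h`. -/
theorem piCyl_per_eq [Nontrivial 𝒜] (h : ℕ) (hh : 1 ≤ h) (a : ℕ → 𝒜)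
    (hH : piCyl h a = h ∨ ¬ piCyl h a ∣ h) :
    ∀ n : ℕ, 2 * h ≤ n → piCyl n (per h a) = h :=
  piCyl_per_eq_general h hh a hH

end Nonconv
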